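/- Let a ≥ 1 and s < 0 < t be integers. Let M be the matrix with rows (1, i, 0), (0, 1, 0), (y, z, 1), where i ∈ 𝒪/𝒫^{-s}, z ∈ 𝒫/𝒫^{t-s}, and y ∈ 𝒫/𝒫^{t} is nonzero with v(y) ≤ a. Set d = t − v(y). Then there exist M' ∈ I^a and C ∈ GL_3(𝒪) such that M'·diag(π^d, π^s, π^{t-d}) = M·diag(1, π^s, π^t)·C. (That is, the point M·x_{(s,t)} of the affine Grassmannian lies in the I^a-orbit of the vertex (s − d, t − 2d), since diag(π^d, π^s, π^{t-d}) = π^d·x_{(s-d, t-2d)}.) -/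

import Mathlib

noncomputable section

/-- The element π of F = K((π)). -/
def pp (K : Type*) [Field K] : LaurentSeries K := HahnSeries.single (1 : ℤ) (1 : K)

/-- The π-adic valuation on F = K((π)), with v(0) = ⊤. -/
def vv {K : Type*} [Field K] (x : LaurentSeries K) : WithTop ℤ := x.orderTop

/-- x ∈ 𝒫^r, i.e. v(x) ≥ r. -/
def inP {K : Type*} [Field K] (r : ℤ) (x : LaurentSeries K) : Prop := (r : WithTop ℤ) ≤ vv x

/-- x ∈ 𝒫^r/𝒫^{r'} : x is a polynomial x_r π^r + ⋯ + x_{r'-1} π^{r'-1} (possibly 0). -/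
def inPQ {K : Type*} [Field K] (r r' : ℤ) (x : LaurentSeries K) : Prop :=
  inP r x ∧ ∀ i : ℤ, r' ≤ i → x.coeff i = 0

/-- Membership in GL₃(𝒪): entries in 𝒪 and determinant a unit of 𝒪. -/
def inGLO {K : Type*} [Field K] (C : Matrix (Fin 3) (Fin 3) (LaurentSeries K)) : Prop :=
  (∀ i j, inP 0 (C i j)) ∧ vv C.det = 0

/-- The matrix x_{(s,t)} = diag(1, π^s, π^t). -/
def xst (K : Type*) [Field K] (s t : ℤ) : Matrix (Fin 3) (Fin 3) (LaurentSeries K) :=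
  Matrix.diagonal ![1, pp K ^ s, pp K ^ t]

/-- Membership in the subgroup I^a of GL₃(F). -/
def inIa {K : Type*} [Field K] (a : ℤ) (g : Matrix (Fin 3) (Fin 3) (LaurentSeries K)) : Prop :=
  g.det ≠ 0 ∧
  vv (g 0 0) = 0 ∧ vv (g 1 1) = 0 ∧ vv (g 2 2) = 0 ∧
  inP (-a) (g 0 1) ∧ inP (-a) (g 0 2) ∧ inP 0 (g 1 2) ∧
  inP (a + 1) (g 1 0) ∧ inP (a + 1) (g 2 0) ∧ inP 1 (g 2 1)

/-- Membership in x_{(s,t)}·GL₃(𝒪)·x_{(s,t)}⁻¹. -/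
def inConj {K : Type*} [Field K] (s t : ℤ) (g : Matrix (Fin 3) (Fin 3) (LaurentSeries K)) : Prop :=
  ∃ C, inGLO C ∧ g = xst K s t * C * (xst K s t)⁻¹

/-- M represents a γ-fixed point at the vertex (s,t): there is C ∈ GL₃(𝒪) with
γ·M·x_{(s,t)} = M·x_{(s,t)}·C. -/
def reprFixed {K : Type*} [Field K] (γ M : Matrix (Fin 3) (Fin 3) (LaurentSeries K))
    (s t : ℤ) : Prop :=
  ∃ C, inGLO C ∧ γ * (M * xst K s t) = M * xst K s t * C

/-!
Write `m = v(y)`, so `d = t - m`, and let `u = y π^{-m}`, a unit of `𝒪`. Column operations by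
`C = [[π^d, 0, 1], [0, 1, 0], [-u, 0, 0]] ∈ GL₃(𝒪)` replace the first column of `M x_{(s,t)}`
by `π^d e₁ + (y π^d - u π^t) e₃ = π^d e₁` and its last one by `e₁ + y e₃`. The result factors
as `M' · diag(π^d, π^s, π^m)` with `M' = [[1, i, π^{-m}], [0, 1, 0], [0, z, u]]`, which lies in
`I^a` because `u` is a unit, `z ∈ 𝒫` and `v(π^{-m}) = -m ≥ -a`.
-/

open HahnSeries

section LaurentSeries

variable {K : Type*} [Field K]

lemma pp_zpow (n : ℤ) : pp K ^ n = single n (1 : K) :=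
  (RatFunc.single_zpow n).symm

lemma pp_ne_zero : pp K ≠ 0 :=
  single_ne_zero one_ne_zero

lemma vv_pp_zpow (n : ℤ) : vv (pp K ^ n) = n := by
  rw [pp_zpow, vv, orderTop_single one_ne_zero]

lemma vv_eq_order {x : LaurentSeries K} (hx : x ≠ 0) : vv x = x.order :=
  (order_eq_orderTop_of_ne_zero hx).symm

lemma vv_mul_pp_zpow_neg_order {x : LaurentSeries K} (hx : x ≠ 0) :
    vv (x * pp K ^ (-x.order)) = 0 := by
  rw [vv, orderTop_mul, ← vv, ← vv, vv_eq_order hx, vv_pp_zpow, ← WithTop.coe_add,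
    add_neg_cancel, WithTop.coe_zero]

lemma inP_zero (r : ℤ) : inP r (0 : LaurentSeries K) := by
  simp [inP, vv]

lemma inP_of_le {r r' : ℤ} {x : LaurentSeries K} (h : r ≤ r') (hx : inP r' x) : inP r x :=
  (WithTop.coe_le_coe.mpr h).trans hx

lemma inP_one : inP 0 (1 : LaurentSeries K) := by
  simp [inP, vv]

lemma inP_of_vv_eq {r : ℤ} {x : LaurentSeries K} (hx : vv x = r) : inP r x :=
  hx.ge

lemma inP_pp_zpow {r n : ℤ} (h : r ≤ n) : inP r (pp K ^ n) :=
  inP_of_le h (inP_of_vv_eq (vv_pp_zpow n))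

lemma inP_neg_iff {r : ℤ} {x : LaurentSeries K} : inP r (-x) ↔ inP r x := by
  rw [inP, inP, vv, vv, orderTop_neg]

lemma le_order_of_inP {r : ℤ} {x : LaurentSeries K} (hx : x ≠ 0) (h : inP r x) : r ≤ x.order := by
  rwa [inP, vv_eq_order hx, WithTop.coe_le_coe] at h

lemma order_lt_of_inPQ {r r' : ℤ} {x : LaurentSeries K} (hx : x ≠ 0) (h : inPQ r r' x) :
    x.order < r' := by
  by_contra! hle
  exact hx (coeff_order_eq_zero.mp (h.2 _ hle))

lemma inIa_of_entries {a : ℤ} {i w z u : LaurentSeries K} (hu : vv u = 0) (hi : inP (-a) i)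
    (hw : inP (-a) w) (hz : inP 1 z) :
    inIa a !![1, i, w; 0, 1, 0; 0, z, u] := by
  have hu0 : u ≠ 0 := by rintro rfl; simp [vv] at hu
  have hone : vv (1 : LaurentSeries K) = 0 := orderTop_one
  refine ⟨?_, hone, hone, hu, hi, hw, inP_zero _, inP_zero _, inP_zero _, hz⟩
  simpa [Matrix.det_fin_three] using hu0

lemma inGLO_of_entries {e u : LaurentSeries K} (he : inP 0 e) (hu : vv u = 0) :
    inGLO !![e, 0, 1; 0, 1, 0; -u, 0, 0] := by
  refine ⟨fun i j => ?_, ?_⟩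
  · fin_cases i <;> fin_cases j <;>
      simp [he, inP_zero, inP_neg_iff.mpr (inP_of_vv_eq hu), inP_one]
  · simpa [Matrix.det_fin_three] using hu

end LaurentSeries

lemma mul_diagonal_eq_mul_diagonal_mul {R : Type*} [CommRing R] {i y z w u e f g h : R}
    (hw : w * g = 1) (hu : u * g = y) (he : y * e = u * h) :
    !![1, i, w; 0, 1, 0; 0, z, u] * Matrix.diagonal ![e, f, g] =
      !![1, i, 0; 0, 1, 0; y, z, 1] * Matrix.diagonal ![1, f, h] *
        !![e, 0, 1; 0, 1, 0; -u, 0, 0] := by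
  simp only [Matrix.diagonal_vec3, Matrix.mul_fin_three]
  ext r c
  fin_cases r <;> fin_cases c <;> simp [hw, hu, he, mul_comm]

theorem stmt4_general (K : Type*) [Field K] (a s t : ℤ)
    (i y z : LaurentSeries K) (hi : inPQ 0 (-s) i) (hz : inPQ 1 (t - s) z)
    (hy : inPQ 1 t y) (hy0 : y ≠ 0) (hya : vv y ≤ (a : WithTop ℤ))
    (d : ℤ) (hd : d = t - y.order) :
    ∃ M' C : Matrix (Fin 3) (Fin 3) (LaurentSeries K), inIa a M' ∧ inGLO C ∧
      M' * Matrix.diagonal ![pp K ^ d, pp K ^ s, pp K ^ (t - d)] =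
        !![1, i, 0; 0, 1, 0; y, z, 1] * xst K s t * C := by
  set m := y.order
  have hm1 : 1 ≤ m := le_order_of_inP hy0 hy.1
  have hma : m ≤ a := by rwa [vv_eq_order hy0, WithTop.coe_le_coe] at hya
  have hmt : m < t := order_lt_of_inPQ hy0 hy
  set u := y * pp K ^ (-m)
  have hu : vv u = 0 := vv_mul_pp_zpow_neg_order hy0
  have hpow : ∀ p q : ℤ, pp K ^ p * pp K ^ q = pp K ^ (p + q) :=
    fun p q => (zpow_add₀ pp_ne_zero p q).symm
  refine ⟨!![1, i, pp K ^ (-m); 0, 1, 0; 0, z, u], !![pp K ^ d, 0, 1; 0, 1, 0; -u, 0, 0],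
    inIa_of_entries hu (inP_of_le (by omega) hi.1) (inP_pp_zpow (by omega)) hz.1,
    inGLO_of_entries (inP_pp_zpow (by omega)) hu, ?_⟩
  refine mul_diagonal_eq_mul_diagonal_mul ?_ ?_ ?_
  · rw [hpow]; simp [hd]
  · rw [mul_assoc, hpow]; simp [hd]
  · rw [mul_assoc, hpow]; congr 2; omega

theorem stmt4 (K : Type*) [Field K] (a s t : ℤ) (ha : 1 ≤ a) (hs : s < 0) (ht : 0 < t)
    (i y z : LaurentSeries K) (hi : inPQ 0 (-s) i) (hz : inPQ 1 (t - s) z)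
    (hy : inPQ 1 t y) (hy0 : y ≠ 0) (hya : vv y ≤ (a : WithTop ℤ))
    (d : ℤ) (hd : d = t - y.order) :
    ∃ M' C : Matrix (Fin 3) (Fin 3) (LaurentSeries K), inIa a M' ∧ inGLO C ∧
      M' * Matrix.diagonal ![pp K ^ d, pp K ^ s, pp K ^ (t - d)] =
        !![1, i, 0; 0, 1, 0; y, z, 1] * xst K s t * C :=
  stmt4_general K a s t i y z hi hz hy hy0 hya d hd
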